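/- For all $\delta > 0$ and integers $B \geq 1$: the map $(\delta, B) \mapsto 1 - 2P(B)A_1(\delta) + A_2(\delta)$ is strictly decreasing in $B$ (for fixed $\delta$) and strictly increasing in $\delta$ (for fixed $B$), where $P(B) = \frac{2^B}{\pi}\sin(\pi/2^B)$, $A_1(\delta) = \frac{20}{\delta\ln 10}(10^{\delta/40}-10^{-\delta/40})$, $A_2(\delta) = \frac{10}{\delta\ln 10}(10^{\delta/20}-10^{-\delta/20})$. -/

import Mathlib

open Real

noncomputable def Pq (B : ℕ) : ℝ := 2 ^ B / π * Real.sin (π / 2 ^ B)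

noncomputable def A1 (δ : ℝ) : ℝ :=
  20 / (δ * Real.log 10) * ((10 : ℝ) ^ (δ/40) - (10 : ℝ) ^ (-(δ/40)))

noncomputable def A2 (δ : ℝ) : ℝ :=
  10 / (δ * Real.log 10) * ((10 : ℝ) ^ (δ/20) - (10 : ℝ) ^ (-(δ/20)))

noncomputable def degradation (B : ℕ) (δ : ℝ) : ℝ := 1 - 2 * Pq B * A1 δ + A2 δ

/-!
With `u = δ ln 10 / 40` one has `A₁ = sinh u / u`, `A₂ = sinh 2u / 2u` and `P(B) = sin t / t` for
`t = π / 2^B`. Monotonicity in `B` is then the strict decrease of `sin t / t` on `(0, π]`, a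
consequence of the concavity of `sin`. Monotonicity in `δ` reduces to that of
`g u = sinh 2u / 2u - p · sinh u / u` for `p = 2P(B) < 2`: writing `K u = u cosh u - sinh u > 0`,
`g' u = (K (2u) - 2p K u) / 2u²`, and `K (2u) > 4 K u` is elementary once `cosh 2u` and `sinh 2u`
are expanded.
-/

open Set

namespace Real

lemma sinh_lt_mul_cosh {x : ℝ} (hx : 0 < x) : sinh x < x * cosh x := by
  have hmono : StrictMonoOn (fun x => x * cosh x - sinh x) (Ici 0) := by
    refine strictMonoOn_of_hasDerivWithinAt_pos (convex_Ici 0) (f' := fun x => x * sinh x)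
      (by fun_prop) (fun x _ => ?_) (fun x hx => ?_)
    · refine (((hasDerivAt_id x).mul (hasDerivAt_cosh x)).sub
        (hasDerivAt_sinh x)).hasDerivWithinAt.congr_deriv ?_
      simp
    · rw [interior_Ici] at hx
      exact mul_pos hx (sinh_pos_iff.2 hx)
  simpa using hmono self_mem_Ici hx.le hx

lemma four_mul_mul_cosh_sub_sinh_lt {x : ℝ} (hx : 0 < x) :
    4 * (x * cosh x - sinh x) < 2 * x * cosh (2 * x) - sinh (2 * x) := by
  rw [cosh_two_mul, sinh_two_mul]
  have hc : 1 < cosh x := one_lt_cosh.2 hx.ne'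
  have hs : x < sinh x := self_lt_sinh_iff.2 hx
  have hs' : sinh x < x * cosh x := sinh_lt_mul_cosh hx
  have hcs : cosh x ^ 2 = sinh x ^ 2 + 1 := cosh_sq x
  -- the difference is affine in `sinh x`; bound it at `sinh x = x` or at `sinh x = x cosh x`
  rcases le_or_gt (cosh x) 2 with hc2 | hc2
  · nlinarith [mul_nonneg (sub_pos.2 hs).le (sub_nonneg.2 hc2),
      mul_pos hx (mul_pos (by linarith : 0 < 2 * cosh x - 1) (sub_pos.2 hc))]
  · nlinarith [mul_pos (sub_pos.2 hs') (sub_pos.2 hc2),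
      mul_pos hx (by nlinarith : 0 < cosh x ^ 2 - 1)]

lemma hasDerivAt_sinh_div_self {x : ℝ} (hx : x ≠ 0) :
    HasDerivAt (fun y => sinh y / y) ((x * cosh x - sinh x) / x ^ 2) x := by
  refine ((hasDerivAt_sinh x).div (hasDerivAt_id x) hx).congr_deriv ?_
  simp only [id, mul_one]
  ring

lemma strictMonoOn_sinh_two_mul_div_sub {p : ℝ} (hp : p ≤ 2) :
    StrictMonoOn (fun x => sinh (2 * x) / (2 * x) - p * (sinh x / x)) (Ioi 0) := by
  have hderiv (x : ℝ) (hx : 0 < x) :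
      HasDerivAt (fun x => sinh (2 * x) / (2 * x) - p * (sinh x / x))
        ((2 * x * cosh (2 * x) - sinh (2 * x) - 2 * p * (x * cosh x - sinh x)) / (2 * x ^ 2)) x := by
    have hx0 : x ≠ 0 := hx.ne'
    refine (((hasDerivAt_sinh_div_self (mul_ne_zero two_ne_zero hx0)).comp x
      ((hasDerivAt_id x).const_mul 2)).sub
      ((hasDerivAt_sinh_div_self hx0).const_mul p)).congr_deriv ?_
    field_simp
  refine strictMonoOn_of_deriv_pos (convex_Ioi 0)
    (fun x hx => (hderiv x hx).continuousAt.continuousWithinAt) (fun x hx => ?_)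
  rw [interior_Ioi, mem_Ioi] at hx
  rw [(hderiv x hx).deriv]
  have hK : 0 < x * cosh x - sinh x := sub_pos.2 (sinh_lt_mul_cosh hx)
  have hK2 := four_mul_mul_cosh_sub_sinh_lt hx
  have hx2 : 0 < 2 * x ^ 2 := by positivity
  exact div_pos (by nlinarith [mul_nonneg hK.le (sub_nonneg.2 hp)]) hx2

lemma rpow_sub_rpow_neg {b : ℝ} (hb : 0 < b) (y : ℝ) :
    b ^ y - b ^ (-y) = 2 * sinh (log b * y) := by
  rw [rpow_def_of_pos hb, rpow_def_of_pos hb, sinh_eq, mul_neg]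
  ring

lemma strictAntiOn_sin_div_self : StrictAntiOn (fun x => sin x / x) (Ioc 0 π) := by
  intro x hx y hy hxy
  simpa using strictConcaveOn_sin_Icc.secant_strict_mono (a := 0) ⟨le_rfl, pi_pos.le⟩
    (Ioc_subset_Icc_self hx) (Ioc_subset_Icc_self hy) hx.1.ne' hy.1.ne' hxy

end Real

lemma A1_eq (δ : ℝ) : A1 δ = sinh (log 10 * (δ / 40)) / (log 10 * (δ / 40)) := by
  rw [A1, rpow_sub_rpow_neg (by norm_num)]
  ring

lemma A2_eq (δ : ℝ) :
    A2 δ = sinh (2 * (log 10 * (δ / 40))) / (2 * (log 10 * (δ / 40))) := by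
  rw [A2, rpow_sub_rpow_neg (by norm_num), show log 10 * (δ / 20) = 2 * (log 10 * (δ / 40)) by ring]
  ring

lemma A1_pos {δ : ℝ} (hδ : 0 < δ) : 0 < A1 δ := by
  have hu : 0 < log 10 * (δ / 40) := mul_pos (log_pos (by norm_num)) (by positivity)
  rw [A1_eq]
  exact div_pos (sinh_pos_iff.2 hu) hu

lemma degradation_eq (B : ℕ) (δ : ℝ) :
    degradation B δ = 1 + (sinh (2 * (log 10 * (δ / 40))) / (2 * (log 10 * (δ / 40)))
      - 2 * Pq B * (sinh (log 10 * (δ / 40)) / (log 10 * (δ / 40)))) := by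
  rw [degradation, A1_eq, A2_eq]
  ring

lemma Pq_eq_sin_div (B : ℕ) : Pq B = sin (π / 2 ^ B) / (π / 2 ^ B) := by
  rw [Pq, div_div_eq_mul_div]
  ring

lemma Pq_lt_one (B : ℕ) : Pq B < 1 := by
  rw [Pq_eq_sin_div, div_lt_one (by positivity)]
  exact sin_lt (by positivity)

lemma Pq_strictMono : StrictMono Pq := by
  have hmem (B : ℕ) : π / 2 ^ B ∈ Ioc 0 π :=
    ⟨by positivity, div_le_self pi_pos.le (one_le_pow₀ one_le_two)⟩
  intro B₁ B₂ h
  rw [Pq_eq_sin_div, Pq_eq_sin_div]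
  exact strictAntiOn_sin_div_self (hmem B₂) (hmem B₁)
    (div_lt_div_of_pos_left pi_pos (by positivity) (pow_lt_pow_right₀ one_lt_two h))

/-- The irreducible residual-SI factor `1 - 2 P(B) A₁(δ) + A₂(δ)` is strictly decreasing in
the phase-shifter resolution `B` (for fixed `δ > 0`) and strictly increasing in the
attenuator stepsize `δ` (for fixed `B ≥ 1`). -/
theorem degradation_monotone :
    (∀ δ : ℝ, 0 < δ → ∀ B₁ B₂ : ℕ, 1 ≤ B₁ → B₁ < B₂ →
      degradation B₂ δ < degradation B₁ δ) ∧
    (∀ B : ℕ, 1 ≤ B → StrictMonoOn (fun δ => degradation B δ) (Set.Ioi 0)) := by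
  constructor
  · intro δ hδ B₁ B₂ _ hB
    have := mul_lt_mul_of_pos_right (Pq_strictMono hB) (A1_pos hδ)
    simp only [degradation]
    linarith
  · intro B _ δ₁ hδ₁ δ₂ hδ₂ hδ
    have hL : 0 < log 10 := log_pos (by norm_num)
    have hu (δ : ℝ) (hδ : δ ∈ Ioi 0) : log 10 * (δ / 40) ∈ Ioi 0 :=
      mul_pos hL (div_pos hδ (by norm_num))
    have := strictMonoOn_sinh_two_mul_div_sub (by linarith [Pq_lt_one B] : 2 * Pq B ≤ 2)
      (hu δ₁ hδ₁) (hu δ₂ hδ₂) (by gcongr)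
    simp only [degradation_eq]
    linarith
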